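/- arXiv:1205.3306 — 2 statements merged into one kernel-verified Lean document; each statement's English description precedes it below -/
import Mathlib

section
/- Let I ⊆ ℝ be an open interval, λ ≠ 0 and h real constants, and let U : I → ℝ be C¹ with λ²U² − h² > 0 on I. Let R̂, Λ̂, Θ̂ : I → ℝ be C¹ functions satisfying R̂ > 0, R̂² = λ²U² − h², (Λ̂')² = (λ²U²/(λ²U² − h²)²)·( λ²U²·(1 − λ²(U')²) − h² ), and Θ̂' = (h/(λ²U²))·Λ̂' on I. Define X(s,t) = (R̂(s)·cos(t/λ − Θ̂(s)), R̂(s)·sin(t/λ − Θ̂(s)), Λ̂(s) + h·(t/λ − Θ̂(s))). Then for every (s,t) ∈ I × ℝ the first fundamental form coefficients satisfy E(s,t) = 1, F(s,t) = 0, and G(s,t) = U(s)²; in particular all these patches (for varying λ, h) induce the same metric ds² + U(s)² dt². -/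
/-! For any helicoidal patch `(R cos φ, R sin φ, Λ + h φ)` with `φ = t/λ - Θ(s)` one computes
`E = R'² + R²Θ'² + (Λ' - hΘ')²`, `λF = hΛ' - (R² + h²)Θ'` and `λ²G = R² + h²`. Bour's choices
`R² + h² = λ²U²` and `λ²U² Θ' = hΛ'` give `G = U²` and `F = 0`, and the equation prescribing `Λ'²`
is exactly `E = 1` once `R'` is eliminated through `R R' = λ² U U'`. -/

open Real

noncomputable section

/-- Euclidean dot product on `ℝ³ = ℝ × ℝ × ℝ`. -/
def dot3 (v w : ℝ × ℝ × ℝ) : ℝ := v.1 * w.1 + v.2.1 * w.2.1 + v.2.2 * w.2.2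

/-- Cross product on `ℝ³ = ℝ × ℝ × ℝ`. -/
def cross3 (v w : ℝ × ℝ × ℝ) : ℝ × ℝ × ℝ :=
  (v.2.1 * w.2.2 - v.2.2 * w.2.1,
   v.2.2 * w.1 - v.1 * w.2.2,
   v.1 * w.2.1 - v.2.1 * w.1)

/-- The vertical unit vector `e₃ = (0,0,1)`. -/
def e3 : ℝ × ℝ × ℝ := ((0 : ℝ), (0 : ℝ), (1 : ℝ))

/-- Partial derivative of a parametrized surface w.r.t. the first parameter. -/
def pd1 (X : ℝ → ℝ → ℝ × ℝ × ℝ) (s t : ℝ) : ℝ × ℝ × ℝ := deriv (fun u => X u t) s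

/-- Partial derivative of a parametrized surface w.r.t. the second parameter. -/
def pd2 (X : ℝ → ℝ → ℝ × ℝ × ℝ) (s t : ℝ) : ℝ × ℝ × ℝ := deriv (fun v => X s v) t

/-- Unit normal `n = (X_s × X_t)/‖X_s × X_t‖`. -/
def unitNormal (X : ℝ → ℝ → ℝ × ℝ × ℝ) (s t : ℝ) : ℝ × ℝ × ℝ :=
  (Real.sqrt (dot3 (cross3 (pd1 X s t) (pd2 X s t)) (cross3 (pd1 X s t) (pd2 X s t))))⁻¹ •
    cross3 (pd1 X s t) (pd2 X s t)

/-- Angle function `n₃ = n · e₃`. -/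
def angleFun (X : ℝ → ℝ → ℝ × ℝ × ℝ) (s t : ℝ) : ℝ := dot3 (unitNormal X s t) e3

/-- Gaussian curvature `K = ((X_ss·n)(X_tt·n) − (X_st·n)²)/(EG − F²)`. -/
def gauss (X : ℝ → ℝ → ℝ × ℝ × ℝ) (s t : ℝ) : ℝ :=
  (dot3 (pd1 (pd1 X) s t) (unitNormal X s t) * dot3 (pd2 (pd2 X) s t) (unitNormal X s t)
      - (dot3 (pd2 (pd1 X) s t) (unitNormal X s t)) ^ 2)
    / (dot3 (pd1 X s t) (pd1 X s t) * dot3 (pd2 X s t) (pd2 X s t)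
        - (dot3 (pd1 X s t) (pd2 X s t)) ^ 2)

def helicoidalPatch (lam h : ℝ) (R Λ Θ : ℝ → ℝ) (s t : ℝ) : ℝ × ℝ × ℝ :=
  (R s * cos (t / lam - Θ s), R s * sin (t / lam - Θ s), Λ s + h * (t / lam - Θ s))

namespace helicoidalPatch

variable {lam h : ℝ} {R Λ Θ : ℝ → ℝ} {s : ℝ}

theorem pd1_eq {R' Λ' Θ' : ℝ} (hR : HasDerivAt R R' s) (hΛ : HasDerivAt Λ Λ' s)
    (hΘ : HasDerivAt Θ Θ' s) (t : ℝ) :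
    pd1 (helicoidalPatch lam h R Λ Θ) s t =
      (R' * cos (t / lam - Θ s) + R s * Θ' * sin (t / lam - Θ s),
       R' * sin (t / lam - Θ s) - R s * Θ' * cos (t / lam - Θ s),
       Λ' - h * Θ') := by
  have hφ : HasDerivAt (fun u => t / lam - Θ u) (-Θ') s := hΘ.const_sub _
  refine HasDerivAt.deriv <|
    ((hR.mul hφ.cos).prodMk ((hR.mul hφ.sin).prodMk (hΛ.add (hφ.const_mul h)))).congr_deriv ?_
  simp only [Prod.mk.injEq]
  exact ⟨by ring, by ring, by ring⟩

theorem pd2_eq (t : ℝ) :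
    pd2 (helicoidalPatch lam h R Λ Θ) s t =
      (-(R s * sin (t / lam - Θ s)) / lam, R s * cos (t / lam - Θ s) / lam, h / lam) := by
  have hφ : HasDerivAt (fun v => v / lam - Θ s) (1 / lam) t :=
    ((hasDerivAt_id t).div_const lam).sub_const _
  refine HasDerivAt.deriv <| ((hφ.cos.const_mul (R s)).prodMk ((hφ.sin.const_mul (R s)).prodMk
    ((hφ.const_mul h).const_add (Λ s)))).congr_deriv ?_
  simp only [Prod.mk.injEq]
  exact ⟨by ring, by ring, by ring⟩

theorem E_eq {R' Λ' Θ' : ℝ} (hR : HasDerivAt R R' s) (hΛ : HasDerivAt Λ Λ' s)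
    (hΘ : HasDerivAt Θ Θ' s) (t : ℝ) :
    dot3 (pd1 (helicoidalPatch lam h R Λ Θ) s t) (pd1 (helicoidalPatch lam h R Λ Θ) s t) =
      R' ^ 2 + R s ^ 2 * Θ' ^ 2 + (Λ' - h * Θ') ^ 2 := by
  rw [pd1_eq hR hΛ hΘ, dot3]
  linear_combination (R' ^ 2 + R s ^ 2 * Θ' ^ 2) * cos_sq_add_sin_sq (t / lam - Θ s)

theorem F_eq {R' Λ' Θ' : ℝ} (hR : HasDerivAt R R' s) (hΛ : HasDerivAt Λ Λ' s)
    (hΘ : HasDerivAt Θ Θ' s) (t : ℝ) :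
    dot3 (pd1 (helicoidalPatch lam h R Λ Θ) s t) (pd2 (helicoidalPatch lam h R Λ Θ) s t) =
      (h * Λ' - (R s ^ 2 + h ^ 2) * Θ') / lam := by
  rw [pd1_eq hR hΛ hΘ, pd2_eq, dot3]
  linear_combination (-(R s ^ 2 * Θ') / lam) * cos_sq_add_sin_sq (t / lam - Θ s)

theorem G_eq (t : ℝ) :
    dot3 (pd2 (helicoidalPatch lam h R Λ Θ) s t) (pd2 (helicoidalPatch lam h R Λ Θ) s t) =
      (R s ^ 2 + h ^ 2) / lam ^ 2 := by
  rw [pd2_eq, dot3]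
  linear_combination (R s ^ 2 / lam ^ 2) * cos_sq_add_sin_sq (t / lam - Θ s)

end helicoidalPatch

theorem mul_deriv_eq_of_sq_eventuallyEq {R U : ℝ → ℝ} {R' U' lam h s : ℝ}
    (hR : HasDerivAt R R' s) (hU : HasDerivAt U U' s)
    (hRU : ∀ᶠ u in nhds s, R u ^ 2 = lam ^ 2 * U u ^ 2 - h ^ 2) :
    R s * R' = lam ^ 2 * (U s * U') := by
  have hsq := (hR.pow 2).unique (((hU.pow 2).const_mul (lam ^ 2)).sub_const (h ^ 2)
    |>.congr_of_eventuallyEq hRU)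
  linear_combination hsq / 2

/-- Write `A = λ²U²`. The relation `Θ' A = h Λ'` collapses `R²Θ'² + (Λ' - hΘ')²` to
`Λ'² (A - h²) / A`, and `R R' = λ² U U'` gives `R'² = A λ² U'² / (A - h²)`; the prescribed value
of `Λ'²` makes the two add up to `1`. -/
theorem bour_speed_eq_one {lam h U U' R R' Λ' Θ' : ℝ} (hpos : 0 < lam ^ 2 * U ^ 2 - h ^ 2)
    (hR : R ^ 2 = lam ^ 2 * U ^ 2 - h ^ 2) (hRR : R * R' = lam ^ 2 * (U * U'))
    (hΛ : Λ' ^ 2 = (lam ^ 2 * U ^ 2 / (lam ^ 2 * U ^ 2 - h ^ 2) ^ 2) *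
      (lam ^ 2 * U ^ 2 * (1 - lam ^ 2 * U' ^ 2) - h ^ 2))
    (hΘ : Θ' = (h / (lam ^ 2 * U ^ 2)) * Λ') :
    R' ^ 2 + R ^ 2 * Θ' ^ 2 + (Λ' - h * Θ') ^ 2 = 1 := by
  set A := lam ^ 2 * U ^ 2
  set D := A - h ^ 2
  have hA : 0 < A := by nlinarith [sq_nonneg h]
  have hR' : R' ^ 2 * D = A * (lam ^ 2 * U' ^ 2) := by
    linear_combination (R * R' + lam ^ 2 * (U * U')) * hRR - R' ^ 2 * hR
  have hΛ' : Λ' ^ 2 * D ^ 2 = A * (A * (1 - lam ^ 2 * U' ^ 2) - h ^ 2) := by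
    rw [hΛ]; field_simp
  have hΘ' : Θ' * A = h * Λ' := by
    rw [hΘ]; field_simp
  refine mul_right_cancel₀ (by positivity : A * D ^ 2 ≠ 0) ?_
  linear_combination A * D * hR' + A * D ^ 2 * Θ' ^ 2 * hR + D ^ 2 * (Θ' * A - h * Λ') * hΘ' +
    D * hΛ'

theorem bour_family_isometric_general
    (I : Set ℝ) (hIopen : IsOpen I)
    (lam h : ℝ) (hlam : lam ≠ 0)
    (U Rh Λh Θh : ℝ → ℝ)
    (hUC : ContDiffOn ℝ 1 U I)
    (hpos : ∀ s ∈ I, 0 < lam ^ 2 * (U s) ^ 2 - h ^ 2)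
    (hRC : ContDiffOn ℝ 1 Rh I) (hΛC : ContDiffOn ℝ 1 Λh I) (hΘC : ContDiffOn ℝ 1 Θh I)
    (hRU : ∀ s ∈ I, (Rh s) ^ 2 = lam ^ 2 * (U s) ^ 2 - h ^ 2)
    (hΛ' : ∀ s ∈ I, (deriv Λh s) ^ 2 =
      (lam ^ 2 * (U s) ^ 2 / (lam ^ 2 * (U s) ^ 2 - h ^ 2) ^ 2) *
        (lam ^ 2 * (U s) ^ 2 * (1 - lam ^ 2 * (deriv U s) ^ 2) - h ^ 2))
    (hΘ' : ∀ s ∈ I, deriv Θh s = (h / (lam ^ 2 * (U s) ^ 2)) * deriv Λh s)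
    (X : ℝ → ℝ → ℝ × ℝ × ℝ)
    (hX : ∀ s t, X s t =
      (Rh s * Real.cos (t / lam - Θh s), Rh s * Real.sin (t / lam - Θh s),
        Λh s + h * (t / lam - Θh s))) :
    ∀ s ∈ I, ∀ t : ℝ,
      dot3 (pd1 X s t) (pd1 X s t) = 1 ∧
      dot3 (pd1 X s t) (pd2 X s t) = 0 ∧
      dot3 (pd2 X s t) (pd2 X s t) = (U s) ^ 2 := by
  intro s hs t
  have hI : I ∈ nhds s := hIopen.mem_nhds hs
  have hasDeriv {f : ℝ → ℝ} (hf : ContDiffOn ℝ 1 f I) : HasDerivAt f (deriv f s) s :=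
    ((hf.contDiffAt hI).differentiableAt one_ne_zero).hasDerivAt
  have hRR : Rh s * deriv Rh s = lam ^ 2 * (U s * deriv U s) :=
    mul_deriv_eq_of_sq_eventuallyEq (hasDeriv hRC) (hasDeriv hUC) (Filter.mem_of_superset hI hRU)
  have hU : U s ≠ 0 := fun hU => by
    have := hpos s hs
    rw [hU] at this
    nlinarith [sq_nonneg h]
  obtain rfl : X = helicoidalPatch lam h Rh Λh Θh := funext₂ hX
  refine ⟨?_, ?_, ?_⟩
  · rw [helicoidalPatch.E_eq (hasDeriv hRC) (hasDeriv hΛC) (hasDeriv hΘC)]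
    exact bour_speed_eq_one (hpos s hs) (hRU s hs) hRR (hΛ' s hs) (hΘ' s hs)
  · rw [helicoidalPatch.F_eq (hasDeriv hRC) (hasDeriv hΛC) (hasDeriv hΘC), hRU s hs, hΘ' s hs]
    field_simp
    ring
  · rw [helicoidalPatch.G_eq, hRU s hs]
    field_simp
    ring

/-- Each member of Bour's two-parameter family of helicoidal surfaces
`Σ^{λ,h}` has first fundamental form `E = 1`, `F = 0`, `G = U²`, i.e. the same induced
metric `ds² + U(s)² dt²`. -/
theorem bour_family_isometric
    (I : Set ℝ) (hIopen : IsOpen I) (hIconn : I.OrdConnected)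
    (lam h : ℝ) (hlam : lam ≠ 0)
    (U Rh Λh Θh : ℝ → ℝ)
    (hUC : ContDiffOn ℝ 1 U I)
    (hpos : ∀ s ∈ I, 0 < lam ^ 2 * (U s) ^ 2 - h ^ 2)
    (hRC : ContDiffOn ℝ 1 Rh I) (hΛC : ContDiffOn ℝ 1 Λh I) (hΘC : ContDiffOn ℝ 1 Θh I)
    (hRpos : ∀ s ∈ I, 0 < Rh s)
    (hRU : ∀ s ∈ I, (Rh s) ^ 2 = lam ^ 2 * (U s) ^ 2 - h ^ 2)
    (hΛ' : ∀ s ∈ I, (deriv Λh s) ^ 2 =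
      (lam ^ 2 * (U s) ^ 2 / (lam ^ 2 * (U s) ^ 2 - h ^ 2) ^ 2) *
        (lam ^ 2 * (U s) ^ 2 * (1 - lam ^ 2 * (deriv U s) ^ 2) - h ^ 2))
    (hΘ' : ∀ s ∈ I, deriv Θh s = (h / (lam ^ 2 * (U s) ^ 2)) * deriv Λh s)
    (X : ℝ → ℝ → ℝ × ℝ × ℝ)
    (hX : ∀ s t, X s t =
      (Rh s * Real.cos (t / lam - Θh s), Rh s * Real.sin (t / lam - Θh s),
        Λh s + h * (t / lam - Θh s))) :
    ∀ s ∈ I, ∀ t : ℝ,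
      dot3 (pd1 X s t) (pd1 X s t) = 1 ∧
      dot3 (pd1 X s t) (pd2 X s t) = 0 ∧
      dot3 (pd2 X s t) (pd2 X s t) = (U s) ^ 2 :=
  bour_family_isometric_general I hIopen lam h hlam U Rh Λh Θh hUC hpos hRC hΛC hΘC hRU hΛ' hΘ' X hX
end
end

section
/- Let I ⊆ ℝ be an open interval, λ ≠ 0 and h real constants, and let U : I → ℝ be C¹ with λ²U² − h² > 0 on I. Let R̂, Λ̂, Θ̂ : I → ℝ be C¹ functions satisfying R̂ > 0, R̂² = λ²U² − h², (Λ̂')² = (λ²U²/(λ²U² − h²)²)·( λ²U²·(1 − λ²(U')²) − h² ), and Θ̂' = (h/(λ²U²))·Λ̂' on I. Define X(s,t) = (R̂(s)·cos(t/λ − Θ̂(s)), R̂(s)·sin(t/λ − Θ̂(s)), Λ̂(s) + h·(t/λ − Θ̂(s))). Then for every (s,t) ∈ I × ℝ one has ((X_s × X_t)·e₃)² = λ²·U'(s)²·U(s)² and ‖X_s × X_t‖² = U(s)²; in particular the squared angle function satisfies (n₃)² = λ²·(U')². -/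
/-!
In the coordinates `(s, φ)` with `φ = t/λ - Θ(s)`, `X` is the helicoidal surface
`Y(s, φ) = (R cos φ, R sin φ, Λ + h φ)`. Since `X_s = Y_s - Θ' Y_φ` and `X_t = λ⁻¹ Y_φ`, we get
`X_s × X_t = λ⁻¹ Y_s × Y_φ`, so `Θ` drops out. The vertical component of `Y_s × Y_φ` is `R R'`,
which equals `λ² U U'` by differentiating `R² = λ²U² - h²`, and Lagrange's identity gives
`‖Y_s × Y_φ‖² = R'²(h² + R²) + Λ'² R²`, which the equation for `Λ'` turns into `λ² U²`.
-/

open Real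

noncomputable section

open Filter Topology

section VectorAlgebra

variable (v w : ℝ × ℝ × ℝ) (c : ℝ)

lemma cross3_smul_right : cross3 v (c • w) = c • cross3 v w := by
  simp only [cross3, Prod.smul_fst, Prod.smul_snd, Prod.smul_mk, smul_eq_mul, Prod.mk.injEq]
  refine ⟨?_, ?_, ?_⟩ <;> ring

lemma cross3_add_smul_left_self : cross3 (v + c • w) w = cross3 v w := by
  simp only [cross3, Prod.fst_add, Prod.snd_add, Prod.smul_fst, Prod.smul_snd, smul_eq_mul,
    Prod.mk.injEq]
  refine ⟨?_, ?_, ?_⟩ <;> ring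

lemma dot3_smul_left : dot3 (c • v) w = c * dot3 v w := by
  simp only [dot3, Prod.smul_fst, Prod.smul_snd, smul_eq_mul]
  ring

lemma dot3_smul_right : dot3 v (c • w) = c * dot3 v w := by
  simp only [dot3, Prod.smul_fst, Prod.smul_snd, smul_eq_mul]
  ring

lemma dot3_self_nonneg : 0 ≤ dot3 v v :=
  add_nonneg (add_nonneg (mul_self_nonneg _) (mul_self_nonneg _)) (mul_self_nonneg _)

lemma dot3_cross3_e3 : dot3 (cross3 v w) e3 = v.1 * w.2.1 - v.2.1 * w.1 := by
  simp only [dot3, cross3, e3]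
  ring

lemma dot3_cross3_self :
    dot3 (cross3 v w) (cross3 v w) = dot3 v v * dot3 w w - dot3 v w ^ 2 := by
  simp only [dot3, cross3]
  ring

end VectorAlgebra

lemma angleFun_sq (X : ℝ → ℝ → ℝ × ℝ × ℝ) (s t : ℝ) :
    angleFun X s t ^ 2 =
      dot3 (cross3 (pd1 X s t) (pd2 X s t)) e3 ^ 2 /
        dot3 (cross3 (pd1 X s t) (pd2 X s t)) (cross3 (pd1 X s t) (pd2 X s t)) := by
  rw [angleFun, unitNormal, dot3_smul_left, mul_pow, inv_pow, sq_sqrt (dot3_self_nonneg _),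
    inv_mul_eq_div]

def helicoid (R Λ : ℝ → ℝ) (h s φ : ℝ) : ℝ × ℝ × ℝ :=
  (R s * cos φ, R s * sin φ, Λ s + h * φ)

section Helicoid

variable {R Λ : ℝ → ℝ} {h s R' Λ' : ℝ}

lemma hasDerivAt_helicoid_angle (R Λ : ℝ → ℝ) (h s φ : ℝ) :
    HasDerivAt (helicoid R Λ h s) (-(R s * sin φ), R s * cos φ, h) φ := by
  have hφ := hasDerivAt_id φ
  show HasDerivAt (fun φ => (R s * cos φ, R s * sin φ, Λ s + h * φ)) _ φ
  convert ((hφ.cos.const_mul (R s)).prodMk ((hφ.sin.const_mul (R s)).prodMk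
    ((hφ.const_mul h).const_add (Λ s)))) using 1 <;> simp

lemma HasDerivAt.helicoid {g : ℝ → ℝ} {g' : ℝ} (hR : HasDerivAt R R' s)
    (hΛ : HasDerivAt Λ Λ' s) (hg : HasDerivAt g g' s) :
    HasDerivAt (fun u => helicoid R Λ h u (g u))
      ((R' * Real.cos (g s), R' * Real.sin (g s), Λ') +
        g' • (-(R s * Real.sin (g s)), R s * Real.cos (g s), h)) s := by
  convert (hR.mul hg.cos).prodMk ((hR.mul hg.sin).prodMk (hΛ.add (hg.const_mul h))) using 1
  · rfl
  · simp only [Prod.smul_mk, smul_eq_mul, Prod.mk_add_mk, Prod.mk.injEq]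
    refine ⟨?_, ?_, ?_⟩ <;> ring

lemma cross3_pd1_pd2_helicoid {Θ : ℝ → ℝ} {Θ' lam : ℝ} (hR : HasDerivAt R R' s)
    (hΛ : HasDerivAt Λ Λ' s) (hΘ : HasDerivAt Θ Θ' s) (X : ℝ → ℝ → ℝ × ℝ × ℝ)
    (hX : ∀ s t, X s t = helicoid R Λ h s (t / lam - Θ s)) (t : ℝ) :
    cross3 (pd1 X s t) (pd2 X s t) =
      lam⁻¹ • cross3 (R' * cos (t / lam - Θ s), R' * sin (t / lam - Θ s), Λ')
        (-(R s * sin (t / lam - Θ s)), R s * cos (t / lam - Θ s), h) := by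
  have hφs : HasDerivAt (fun u => t / lam - Θ u) (-Θ') s := by
    simpa using hΘ.const_sub (t / lam)
  have hφt : HasDerivAt (fun v => v / lam - Θ s) lam⁻¹ t := by
    simpa [div_eq_mul_inv] using ((hasDerivAt_id t).div_const lam).sub_const (Θ s)
  have hpd2 : HasDerivAt (fun v => helicoid R Λ h s (v / lam - Θ s)) (lam⁻¹ • _) t :=
    (hasDerivAt_helicoid_angle R Λ h s _).scomp t hφt
  simp only [pd1, pd2, hX]
  rw [(hR.helicoid hΛ hφs).deriv, hpd2.deriv, cross3_smul_right, cross3_add_smul_left_self]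

end Helicoid

section HelicoidNormal

variable (r R' Λ' h φ : ℝ)

lemma dot3_cross3_helicoid_e3 :
    dot3 (cross3 (R' * cos φ, R' * sin φ, Λ') (-(r * sin φ), r * cos φ, h)) e3 = r * R' := by
  rw [dot3_cross3_e3]
  linear_combination r * R' * sin_sq_add_cos_sq φ

lemma dot3_cross3_helicoid_self :
    dot3 (cross3 (R' * cos φ, R' * sin φ, Λ') (-(r * sin φ), r * cos φ, h))
      (cross3 (R' * cos φ, R' * sin φ, Λ') (-(r * sin φ), r * cos φ, h)) =
      R' ^ 2 * (h ^ 2 + r ^ 2) + Λ' ^ 2 * r ^ 2 := by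
  rw [dot3_cross3_self]
  simp only [dot3]
  linear_combination (R' ^ 2 * (r ^ 2 * (sin φ ^ 2 + cos φ ^ 2 + 1) + h ^ 2) + Λ' ^ 2 * r ^ 2)
    * sin_sq_add_cos_sq φ

end HelicoidNormal

lemma bour_cross_sq_eq {lam h u u' r r' l' : ℝ} (hD : lam ^ 2 * u ^ 2 - h ^ 2 ≠ 0)
    (hr : r ^ 2 = lam ^ 2 * u ^ 2 - h ^ 2) (hrr' : r * r' = lam ^ 2 * (u * u'))
    (hl' : l' ^ 2 = (lam ^ 2 * u ^ 2 / (lam ^ 2 * u ^ 2 - h ^ 2) ^ 2) *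
        (lam ^ 2 * u ^ 2 * (1 - lam ^ 2 * u' ^ 2) - h ^ 2)) :
    r' ^ 2 * (h ^ 2 + r ^ 2) + l' ^ 2 * r ^ 2 = lam ^ 2 * u ^ 2 := by
  rw [hl', hr]
  field_simp
  linear_combination (-lam ^ 2 * u ^ 2 * r' ^ 2) * hr
    + (lam ^ 2 * u ^ 2 * (r * r' + lam ^ 2 * (u * u'))) * hrr'

lemma mul_deriv_eq_of_sq_eq {R U : ℝ → ℝ} {R' U' lam h s : ℝ} (hR : HasDerivAt R R' s)
    (hU : HasDerivAt U U' s) (hRU : ∀ᶠ x in 𝓝 s, R x ^ 2 = lam ^ 2 * U x ^ 2 - h ^ 2) :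
    R s * R' = lam ^ 2 * (U s * U') := by
  have hsq : HasDerivAt (fun x => lam ^ 2 * U x ^ 2 - h ^ 2) (2 * R s * R') s := by
    simpa using (hR.pow 2).congr_of_eventuallyEq (hRU.mono fun x hx => hx.symm)
  have := hsq.unique (((hU.pow 2).const_mul (lam ^ 2)).sub_const (h ^ 2))
  simp only [Nat.cast_ofNat] at this
  linear_combination this / 2

theorem bour_family_angle_function_general
    (I : Set ℝ) (hIopen : IsOpen I)
    (lam h : ℝ) (hlam : lam ≠ 0)
    (U Rh Λh Θh : ℝ → ℝ)
    (hUC : ContDiffOn ℝ 1 U I)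
    (hpos : ∀ s ∈ I, 0 < lam ^ 2 * (U s) ^ 2 - h ^ 2)
    (hRC : ContDiffOn ℝ 1 Rh I) (hΛC : ContDiffOn ℝ 1 Λh I) (hΘC : ContDiffOn ℝ 1 Θh I)
    (hRU : ∀ s ∈ I, (Rh s) ^ 2 = lam ^ 2 * (U s) ^ 2 - h ^ 2)
    (hΛ' : ∀ s ∈ I, (deriv Λh s) ^ 2 =
      (lam ^ 2 * (U s) ^ 2 / (lam ^ 2 * (U s) ^ 2 - h ^ 2) ^ 2) *
        (lam ^ 2 * (U s) ^ 2 * (1 - lam ^ 2 * (deriv U s) ^ 2) - h ^ 2))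
    (X : ℝ → ℝ → ℝ × ℝ × ℝ)
    (hX : ∀ s t, X s t =
      (Rh s * Real.cos (t / lam - Θh s), Rh s * Real.sin (t / lam - Θh s),
        Λh s + h * (t / lam - Θh s))) :
    ∀ s ∈ I, ∀ t : ℝ,
      (dot3 (cross3 (pd1 X s t) (pd2 X s t)) e3) ^ 2
          = lam ^ 2 * (deriv U s) ^ 2 * (U s) ^ 2 ∧
      dot3 (cross3 (pd1 X s t) (pd2 X s t)) (cross3 (pd1 X s t) (pd2 X s t)) = (U s) ^ 2 ∧
      (angleFun X s t) ^ 2 = lam ^ 2 * (deriv U s) ^ 2 := by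
  intro s hs t
  have hI : I ∈ 𝓝 s := hIopen.mem_nhds hs
  have hasDerivAt_deriv {f : ℝ → ℝ} (hf : ContDiffOn ℝ 1 f I) : HasDerivAt f (deriv f s) s :=
    ((hf.contDiffAt hI).differentiableAt one_ne_zero).hasDerivAt
  have hRR' : Rh s * deriv Rh s = lam ^ 2 * (U s * deriv U s) :=
    mul_deriv_eq_of_sq_eq (hasDerivAt_deriv hRC) (hasDerivAt_deriv hUC)
      (eventually_of_mem hI hRU)
  have hU : U s ≠ 0 := by
    rintro hU0
    have := hpos s hs
    rw [hU0] at this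
    nlinarith [sq_nonneg h]
  have hcross := cross3_pd1_pd2_helicoid (hasDerivAt_deriv hRC) (hasDerivAt_deriv hΛC)
    (hasDerivAt_deriv hΘC) X hX t
  have he3 :
      dot3 (cross3 (pd1 X s t) (pd2 X s t)) e3 = lam⁻¹ * (lam ^ 2 * (U s * deriv U s)) := by
    rw [hcross, dot3_smul_left, dot3_cross3_helicoid_e3, hRR']
  have hnorm :
      dot3 (cross3 (pd1 X s t) (pd2 X s t)) (cross3 (pd1 X s t) (pd2 X s t)) = U s ^ 2 := by
    rw [hcross, dot3_smul_left, dot3_smul_right, dot3_cross3_helicoid_self,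
      bour_cross_sq_eq (hpos s hs).ne' (hRU s hs) hRR' (hΛ' s hs)]
    field_simp
  refine ⟨?_, hnorm, ?_⟩
  · rw [he3]
    field_simp
  · rw [angleFun_sq, he3, hnorm]
    field_simp

/-- For each member of Bour's two-parameter family `Σ^{λ,h}` one has
`((X_s × X_t)·e₃)² = λ²(U')²U²` and `‖X_s × X_t‖² = U²`; in particular the squared angle
function satisfies `(n₃)² = λ²(U')²`. -/
theorem bour_family_angle_function
    (I : Set ℝ) (hIopen : IsOpen I) (hIconn : I.OrdConnected)
    (lam h : ℝ) (hlam : lam ≠ 0)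
    (U Rh Λh Θh : ℝ → ℝ)
    (hUC : ContDiffOn ℝ 1 U I)
    (hpos : ∀ s ∈ I, 0 < lam ^ 2 * (U s) ^ 2 - h ^ 2)
    (hRC : ContDiffOn ℝ 1 Rh I) (hΛC : ContDiffOn ℝ 1 Λh I) (hΘC : ContDiffOn ℝ 1 Θh I)
    (hRpos : ∀ s ∈ I, 0 < Rh s)
    (hRU : ∀ s ∈ I, (Rh s) ^ 2 = lam ^ 2 * (U s) ^ 2 - h ^ 2)
    (hΛ' : ∀ s ∈ I, (deriv Λh s) ^ 2 =
      (lam ^ 2 * (U s) ^ 2 / (lam ^ 2 * (U s) ^ 2 - h ^ 2) ^ 2) *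
        (lam ^ 2 * (U s) ^ 2 * (1 - lam ^ 2 * (deriv U s) ^ 2) - h ^ 2))
    (hΘ' : ∀ s ∈ I, deriv Θh s = (h / (lam ^ 2 * (U s) ^ 2)) * deriv Λh s)
    (X : ℝ → ℝ → ℝ × ℝ × ℝ)
    (hX : ∀ s t, X s t =
      (Rh s * Real.cos (t / lam - Θh s), Rh s * Real.sin (t / lam - Θh s),
        Λh s + h * (t / lam - Θh s))) :
    ∀ s ∈ I, ∀ t : ℝ,
      (dot3 (cross3 (pd1 X s t) (pd2 X s t)) e3) ^ 2
          = lam ^ 2 * (deriv U s) ^ 2 * (U s) ^ 2 ∧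
      dot3 (cross3 (pd1 X s t) (pd2 X s t)) (cross3 (pd1 X s t) (pd2 X s t)) = (U s) ^ 2 ∧
      (angleFun X s t) ^ 2 = lam ^ 2 * (deriv U s) ^ 2 :=
  bour_family_angle_function_general I hIopen lam h hlam U Rh Λh Θh hUC hpos hRC hΛC hΘC hRU hΛ' X
    hX
end
end
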